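/- arXiv:1812.02278 — 2 statements merged into one kernel-verified Lean document; each statement's English description precedes it below -/
import Mathlib

section
/- Let M > 0 and Q real with Q² = γM² where 0 ≤ γ < 1, and set r = M(1 + √(1 − γ))x. Then the r-derivative of the Morawetz multiplier f(r) = (1 − 3M/r + 2Q²/r²)(1 + M/r + Q²/(2r²)) equals (1/(2r⁵))·(4Mr³ + (12M² − 10Q²)r² − 3MQ²r − 8Q⁴), and for γ = 0 this expression is strictly positive for all x ≥ 1. -/
theorem morawetz_multiplier_derivative (M Q γ x r : ℝ) (hM : 0 < M)
    (hγ0 : 0 ≤ γ) (hγ1 : γ < 1) (hQ : Q ^ 2 = γ * M ^ 2)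
    (hx : 1 ≤ x) (hr : r = M * (1 + Real.sqrt (1 - γ)) * x) :
    HasDerivAt (fun s : ℝ => (1 - 3 * M / s + 2 * Q ^ 2 / s ^ 2) *
        (1 + M / s + Q ^ 2 / (2 * s ^ 2)))
      (1 / (2 * r ^ 5) *
        (4 * M * r ^ 3 + (12 * M ^ 2 - 10 * Q ^ 2) * r ^ 2 - 3 * M * Q ^ 2 * r
          - 8 * Q ^ 4)) r ∧
    (γ = 0 → 0 < 1 / (2 * r ^ 5) *
        (4 * M * r ^ 3 + (12 * M ^ 2 - 10 * Q ^ 2) * r ^ 2 - 3 * M * Q ^ 2 * r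
          - 8 * Q ^ 4)) := by
  have hs : (0:ℝ) ≤ Real.sqrt (1 - γ) := Real.sqrt_nonneg _
  have hrpos : 0 < r := by
    rw [hr]
    have h1 : 0 < 1 + Real.sqrt (1 - γ) := by linarith
    have hx0 : (0:ℝ) < x := by linarith
    exact mul_pos (mul_pos hM h1) hx0
  have hrne : r ≠ 0 := ne_of_gt hrpos
  constructor
  · have h1 : HasDerivAt (fun s : ℝ => 1 - 3 * M / s + 2 * Q ^ 2 / s ^ 2)
        (3 * M / r ^ 2 - 4 * Q ^ 2 / r ^ 3) r := by
      have hA : HasDerivAt (fun s : ℝ => 3 * M / s) (3 * M * (-1 / r ^ 2)) r := by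
        simpa [div_eq_mul_inv] using ((hasDerivAt_inv hrne).const_mul (3 * M)).congr_deriv (by ring)
      have hB : HasDerivAt (fun s : ℝ => 2 * Q ^ 2 / s ^ 2)
          (2 * Q ^ 2 * (-(2 / r ^ 3))) r := by
        have := ((hasDerivAt_pow 2 r).inv (pow_ne_zero 2 hrne)).const_mul (2 * Q ^ 2)
        refine this.congr_deriv ?_
        push_cast; field_simp
      have := ((hasDerivAt_const r (1:ℝ)).sub hA).add hB
      refine this.congr_deriv ?_
      field_simp; ring
    have h2 : HasDerivAt (fun s : ℝ => 1 + M / s + Q ^ 2 / (2 * s ^ 2))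
        (-(M / r ^ 2) - Q ^ 2 / r ^ 3) r := by
      have hA : HasDerivAt (fun s : ℝ => M / s) (M * (-1 / r ^ 2)) r := by
        simpa [div_eq_mul_inv] using ((hasDerivAt_inv hrne).const_mul M).congr_deriv (by ring)
      have hB : HasDerivAt (fun s : ℝ => Q ^ 2 / (2 * s ^ 2))
          (Q ^ 2 / 2 * (-(2 / r ^ 3))) r := by
        have := ((hasDerivAt_pow 2 r).inv (pow_ne_zero 2 hrne)).const_mul (Q ^ 2 / 2)
        have heq : (fun s : ℝ => Q ^ 2 / (2 * s ^ 2)) = fun s : ℝ => Q ^ 2 / 2 * (s ^ 2)⁻¹ := by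
          funext s; ring
        rw [heq]
        refine this.congr_deriv ?_
        push_cast; field_simp
      have := ((hasDerivAt_const r (1:ℝ)).add hA).add hB
      refine this.congr_deriv ?_
      field_simp; ring
    have := h1.mul h2
    refine this.congr_deriv ?_
    field_simp
    ring
  · intro hγ
    have hQ0 : Q ^ 2 = 0 := by rw [hQ, hγ]; ring
    have h4 : Q ^ 4 = 0 := by
      have : Q ^ 4 = (Q ^ 2) ^ 2 := by ring
      rw [this, hQ0]; ring
    rw [hQ0, h4]
    have hden : 0 < 1 / (2 * r ^ 5) := by positivity
    have : 0 < 4 * M * r ^ 3 + (12 * M ^ 2 - 10 * 0) * r ^ 2 - 3 * M * 0 * r - 8 * 0 := by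
      nlinarith [pow_pos hrpos 3, pow_pos hrpos 2, sq_nonneg M]
    positivity
end

section
/- Let M > 0 and |Q| < M with Q² = γM², 0 ≤ γ < 1. Consider the degree-8 polynomial in r: P(r) = 656Q⁸ − 1822MQ⁶r + 160M²Q⁴r² + 1504Q⁶r² + 2412M³Q²r³ − 2986MQ⁴r³ − 1152M⁴r⁴ + 404M²Q²r⁴ + 1072Q⁴r⁴ + 744M³r⁵ − 1224MQ²r⁵ + 64M²r⁶ + 256Q²r⁶ − 104Mr⁷ + 16r⁸. Then for γ = 0 (i.e. Q = 0) and r ≥ 2M, P(r) = M⁸·2⁸x⁴·(16x⁴ − 52x³ + 16x² + 93x − 72) under the substitution r = 2Mx, and hence P(r) > 0 for all r ≥ 2M. -/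
theorem morawetz_degree8_schwarzschild (M Q γ : ℝ) (hM : 0 < M)
    (hγ0 : 0 ≤ γ) (hγ1 : γ < 1) (hQ : Q ^ 2 = γ * M ^ 2) (hγ : γ = 0)
    (P : ℝ → ℝ)
    (hP : ∀ r : ℝ, P r =
      656 * Q ^ 8 - 1822 * M * Q ^ 6 * r + 160 * M ^ 2 * Q ^ 4 * r ^ 2 +
        1504 * Q ^ 6 * r ^ 2 + 2412 * M ^ 3 * Q ^ 2 * r ^ 3 - 2986 * M * Q ^ 4 * r ^ 3 -
        1152 * M ^ 4 * r ^ 4 + 404 * M ^ 2 * Q ^ 2 * r ^ 4 + 1072 * Q ^ 4 * r ^ 4 +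
        744 * M ^ 3 * r ^ 5 - 1224 * M * Q ^ 2 * r ^ 5 + 64 * M ^ 2 * r ^ 6 +
        256 * Q ^ 2 * r ^ 6 - 104 * M * r ^ 7 + 16 * r ^ 8) :
    ∀ r : ℝ, 2 * M ≤ r →
      P r = M ^ 8 * 2 ^ 8 * (r / (2 * M)) ^ 4 *
          (16 * (r / (2 * M)) ^ 4 - 52 * (r / (2 * M)) ^ 3 + 16 * (r / (2 * M)) ^ 2 +
            93 * (r / (2 * M)) - 72) ∧
      0 < P r := by
  intro r hr
  have hQ0 : Q = 0 := by
    have : Q ^ 2 = 0 := by rw [hQ, hγ]; ring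
    exact pow_eq_zero_iff (by norm_num) |>.mp this
  have hM0 : (2 * M) ≠ 0 := by positivity
  set x : ℝ := r / (2 * M) with hx
  have hx1 : 1 ≤ x := (one_le_div (by positivity)).mpr hr
  have hr' : r = 2 * M * x := by rw [hx]; field_simp
  have heq : P r = M ^ 8 * 2 ^ 8 * x ^ 4 *
      (16 * x ^ 4 - 52 * x ^ 3 + 16 * x ^ 2 + 93 * x - 72) := by
    rw [hP, hQ0, hr']; ring
  refine ⟨heq, ?_⟩
  rw [heq]
  have hq : 0 < 16 * x ^ 4 - 52 * x ^ 3 + 16 * x ^ 2 + 93 * x - 72 := by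
    nlinarith [sq_nonneg (x - 1), sq_nonneg (x ^ 2 - 1), sq_nonneg (x ^ 2 - 2 * x + 1),
      sq_nonneg (4 * x ^ 2 - 4 * x - 1), mul_nonneg (sub_nonneg.mpr hx1) (sq_nonneg (x - 1))]
  positivity
end
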